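/- arXiv:2203.06842 — 4 statements merged into one kernel-verified Lean document; each statement's English description precedes it below -/
import Mathlib

section
/- Let x ∈ 𝔹 and d ∈ E satisfy ⟪A x^{m-1}, P_x d⟫ < 0, and let σ ∈ (0,1). Then there exists ᾱ > 0 such that for all α ∈ (0, ᾱ], φ(x(α)) ≤ φ(x) + σ α ⟪A x^{m-1}, P_x d⟫; in particular φ(x(α)) < φ(x) for all such α, i.e. d is a curve descent direction of φ at x. -/
open scoped RealInnerProductSpace

noncomputable section

/-- Euclidean space `ℝ^n`. -/
abbrev Euc (n : ℕ) : Type := EuclideanSpace ℝ (Fin n)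

/-- An `m`-th order tensor on `ℝ^n`, viewed as a continuous `m`-multilinear form. -/
abbrev Tensor (m n : ℕ) : Type := ContinuousMultilinearMap ℝ (fun _ : Fin m => Euc n) ℝ

/-- A tensor is symmetric if it is invariant under every permutation of its arguments. -/
def IsSymmTensor {m n : ℕ} (A : Tensor m n) : Prop :=
  ∀ (e : Equiv.Perm (Fin m)) (v : Fin m → Euc n), A (v ∘ e) = A v

/-- `A x^m`, the homogeneous form `A (x, …, x)`. -/
def tpow {m n : ℕ} (A : Tensor m n) (x : Euc n) : ℝ := A (fun _ => x)

/-- The last index of `Fin m`. -/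
def lastIdx {m : ℕ} (_hm : 2 ≤ m) : Fin m := ⟨m - 1, by omega⟩

/-- The second to last index of `Fin m`. -/
def sndIdx {m : ℕ} (_hm : 2 ≤ m) : Fin m := ⟨m - 2, by omega⟩

lemma sndIdx_ne_lastIdx {m : ℕ} (hm : 2 ≤ m) : sndIdx hm ≠ lastIdx hm := by
  simp only [sndIdx, lastIdx, Fin.mk.injEq, ne_eq]
  omega

/-- `A x^{m-1}`: the unique vector with `⟪A x^{m-1}, v⟫ = A (x, …, x, v)` for all `v`. -/
def tvec {m n : ℕ} (A : Tensor m n) (hm : 2 ≤ m) (x : Euc n) : Euc n :=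
  (InnerProductSpace.toDual ℝ (Euc n)).symm
    (A.toContinuousLinearMap (fun _ => x) (lastIdx hm))

/-- `F(x) = A x^{m-1} - (A x^m) • x`. -/
def Fvec {m n : ℕ} (A : Tensor m n) (hm : 2 ≤ m) (x : Euc n) : Euc n :=
  tvec A hm x - tpow A x • x

/-- `φ(x) = (1/m) A x^m`. -/
def phi {m n : ℕ} (A : Tensor m n) (x : Euc n) : ℝ := (1 / (m : ℝ)) * tpow A x

/-- Orthogonal projection `P_x d = d - ⟪x, d⟫ x` (for `x` a unit vector). -/
def Pproj {n : ℕ} (x d : Euc n) : Euc n := d - ⟪x, d⟫ • x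

/-- `x(α) = (x + α d)/‖x + α d‖`, the projection of `x + α d` onto the unit sphere. -/
def xcur {n : ℕ} (x d : Euc n) (α : ℝ) : Euc n := ‖x + α • d‖⁻¹ • (x + α • d)

/-- `w(x, d)`: the unique vector with `⟪w(x, d), v⟫ = A (x, …, x, d, v)` for all `v`. -/
def wvec {m n : ℕ} (A : Tensor m n) (hm : 2 ≤ m) (x d : Euc n) : Euc n :=
  (InnerProductSpace.toDual ℝ (Euc n)).symm
    (A.toContinuousLinearMap (Function.update (fun _ => x) (sndIdx hm) d) (lastIdx hm))

/-- `A (x, …, x, d, d)`. -/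
def A2 {m n : ℕ} (A : Tensor m n) (hm : 2 ≤ m) (x d : Euc n) : ℝ :=
  A (Function.update (Function.update (fun _ => x) (sndIdx hm) d) (lastIdx hm) d)

lemma wvec_add {m n : ℕ} (A : Tensor m n) (hm : 2 ≤ m) (x d₁ d₂ : Euc n) :
    wvec A hm x (d₁ + d₂) = wvec A hm x d₁ + wvec A hm x d₂ := by
  unfold wvec
  rw [← map_add]
  congr 1
  ext v
  simp only [ContinuousMultilinearMap.toContinuousLinearMap_apply, ContinuousLinearMap.add_apply]
  rw [Function.update_comm (sndIdx_ne_lastIdx hm), Function.update_comm (sndIdx_ne_lastIdx hm),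
    Function.update_comm (sndIdx_ne_lastIdx hm)]
  exact A.map_update_add _ _ _ _

lemma wvec_smul {m n : ℕ} (A : Tensor m n) (hm : 2 ≤ m) (x : Euc n) (c : ℝ) (d : Euc n) :
    wvec A hm x (c • d) = c • wvec A hm x d := by
  unfold wvec
  rw [← map_smul]
  congr 1
  ext v
  simp only [ContinuousMultilinearMap.toContinuousLinearMap_apply,
    ContinuousLinearMap.smul_apply, smul_eq_mul]
  rw [Function.update_comm (sndIdx_ne_lastIdx hm), Function.update_comm (sndIdx_ne_lastIdx hm)]
  exact A.map_update_smul _ _ _ _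

/-- The Jacobian `F'(x) d = (m-1) w(x,d) - (A x^m) d - m ⟪A x^{m-1}, d⟫ x`. -/
def FderivL {m n : ℕ} (A : Tensor m n) (hm : 2 ≤ m) (x : Euc n) : Euc n →L[ℝ] Euc n :=
  LinearMap.toContinuousLinearMap
  { toFun := fun d =>
      ((m : ℝ) - 1) • wvec A hm x d - tpow A x • d - ((m : ℝ) * ⟪tvec A hm x, d⟫) • x
    map_add' := by
      intro d₁ d₂
      try simp only
      rw [wvec_add, inner_add_right]
      module
    map_smul' := by
      intro c d
      simp only [RingHom.id_apply]
      rw [wvec_smul, inner_smul_right]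
      module }

/-- A Newton direction at `x`: `⟪x, d⟫ = 0` and `P_x (F'(x) d + F(x)) = 0`. -/
def NewtonDir {m n : ℕ} (A : Tensor m n) (hm : 2 ≤ m) (x d : Euc n) : Prop :=
  ⟪x, d⟫ = 0 ∧ Pproj x (FderivL A hm x d + Fvec A hm x) = 0

/-- The residual function `θ(x) = (1/2)‖F(x)‖²`. -/
def theta {m n : ℕ} (A : Tensor m n) (hm : 2 ≤ m) (x : Euc n) : ℝ :=
  (1 / 2) * ‖Fvec A hm x‖ ^ 2

/-- Assumption (A): second-order sufficient condition at the KKT point `x̄`. -/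
def AssumpA {m n : ℕ} (A : Tensor m n) (hm : 2 ≤ m) (xb : Euc n) (lam : ℝ) : Prop :=
  ‖xb‖ = 1 ∧ tvec A hm xb = lam • xb ∧ lam = tpow A xb ∧
    ∀ d : Euc n, d ≠ 0 → ⟪xb, d⟫ = 0 →
      0 < ((m : ℝ) - 1) * A2 A hm xb d - lam * ‖d‖ ^ 2

end


/-! The curve `α ↦ x(α)` passes through `x` at `α = 0` with velocity `P_x d`, and by symmetry of
`A` the gradient of `φ` is `A x^{m-1}`; hence `(φ ∘ x(·))'(0) = ⟪A x^{m-1}, P_x d⟫ < 0`. A negative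
derivative yields the Armijo inequality for every `σ < 1` on some interval `(0, ᾱ]`, and `σ > 0`
makes the decrease strict. -/

open Filter Set Topology

theorem HasDerivAt.exists_armijo {f : ℝ → ℝ} {L σ : ℝ}
    (hf : HasDerivAt f L 0) (hL : L < 0) (hσ : σ < 1) :
    ∃ αbar > 0, ∀ α ∈ Ioc (0 : ℝ) αbar, f α ≤ f 0 + σ * α * L := by
  have hslope : ∀ᶠ α in 𝓝[>] (0 : ℝ), slope f 0 α < σ * L :=
    (hf.tendsto_slope.mono_left (nhdsWithin_mono _ fun _ h => ne_of_gt h)).eventually_lt_const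
      (by nlinarith)
  obtain ⟨αbar, hαbar, hsub⟩ :=
    mem_nhdsGT_iff_exists_Ioc_subset.1 (hslope.and self_mem_nhdsWithin)
  refine ⟨αbar, hαbar, fun α hα => ?_⟩
  obtain ⟨hlt, hpos : 0 < α⟩ := hsub hα
  rw [slope_def_field, sub_zero, div_lt_iff₀ hpos] at hlt
  linarith

section Line

variable {E : Type*} [NormedAddCommGroup E] [InnerProductSpace ℝ E]

theorem hasDerivAt_add_smul (x d : E) (a : ℝ) : HasDerivAt (fun α : ℝ => x + α • d) d a := by
  simpa using ((hasDerivAt_id a).smul_const d).const_add x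

theorem hasDerivAt_norm_add_smul {x : E} (hx : x ≠ 0) (d : E) :
    HasDerivAt (fun α : ℝ => ‖x + α • d‖) (⟪x, d⟫ / ‖x‖) 0 := by
  have h := (hasDerivAt_add_smul x d 0).norm_sq.sqrt (by simpa using hx)
  simp only [zero_smul, add_zero, Real.sqrt_sq (norm_nonneg _)] at h
  convert h using 1
  field_simp

end Line

variable {n : ℕ}

theorem hasDerivAt_xcur {x : Euc n} (hx : ‖x‖ = 1) (d : Euc n) :
    HasDerivAt (xcur x d) (Pproj x d) 0 := by
  have hnorm := hasDerivAt_norm_add_smul (norm_ne_zero_iff.1 (hx.trans_ne one_ne_zero)) d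
  have h := (hnorm.inv (by simp [hx])).smul (hasDerivAt_add_smul x d 0)
  simp only [zero_smul, add_zero, hx] at h
  exact h.congr_deriv (by simp [Pproj, hx, sub_eq_add_neg])

theorem xcur_zero {x : Euc n} (hx : ‖x‖ = 1) (d : Euc n) : xcur x d 0 = x := by
  simp [xcur, hx]

variable {m : ℕ}

theorem inner_tvec (A : Tensor m n) (hm : 2 ≤ m) (x v : Euc n) :
    ⟪tvec A hm x, v⟫ = A (Function.update (fun _ => x) (lastIdx hm) v) := by
  simp [tvec, InnerProductSpace.toDual_symm_apply]

theorem IsSymmTensor.apply_update_eq {A : Tensor m n} (hA : IsSymmTensor A) (x v : Euc n)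
    (i j : Fin m) :
    A (Function.update (fun _ => x) i v) = A (Function.update (fun _ => x) j v) := by
  rw [← hA (Equiv.swap i j) (Function.update (fun _ => x) j v)]
  congr 1
  funext k
  simp only [Function.comp_apply, Function.update_apply, Equiv.swap_apply_def]
  split_ifs <;> simp_all

theorem IsSymmTensor.hasFDerivAt_tpow {A : Tensor m n} (hA : IsSymmTensor A) (hm : 2 ≤ m)
    (x : Euc n) : HasFDerivAt (tpow A) ((m : ℝ) • innerSL ℝ (tvec A hm x)) x := by
  have hdiag := (A.hasFDerivAt (fun _ => x)).comp x
    (ContinuousLinearMap.pi fun _ : Fin m => ContinuousLinearMap.id ℝ (Euc n)).hasFDerivAt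
  -- the `m` terms `A (x, …, v, …, x)` of the multilinear derivative coincide by symmetry
  refine hdiag.congr_fderiv (ContinuousLinearMap.ext fun v => ?_)
  simp [ContinuousMultilinearMap.linearDeriv_apply, inner_tvec,
    hA.apply_update_eq x v _ (lastIdx hm)]

theorem IsSymmTensor.hasFDerivAt_phi {A : Tensor m n} (hA : IsSymmTensor A) (hm : 2 ≤ m)
    (x : Euc n) : HasFDerivAt (phi A) (innerSL ℝ (tvec A hm x)) x := by
  have hm0 : (m : ℝ) ≠ 0 := by positivity
  refine ((hA.hasFDerivAt_tpow hm x).const_mul (1 / (m : ℝ))).congr_fderiv ?_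
  rw [smul_smul, one_div_mul_cancel hm0, one_smul]

theorem stmt2_general {m n : ℕ} (hm : 2 ≤ m) (A : Tensor m n) (hA : IsSymmTensor A)
    (x : Euc n) (hx : ‖x‖ = 1) (d : Euc n)
    (hd : ⟪tvec A hm x, Pproj x d⟫ < 0) (σ : ℝ) (hσ : σ ∈ Set.Ioo (0 : ℝ) 1) :
    ∃ αbar > 0, ∀ α ∈ Set.Ioc (0 : ℝ) αbar,
      phi A (xcur x d α) ≤ phi A x + σ * α * ⟪tvec A hm x, Pproj x d⟫ ∧
      phi A (xcur x d α) < phi A x := by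
  have hderiv : HasDerivAt (fun α => phi A (xcur x d α)) ⟪tvec A hm x, Pproj x d⟫ 0 :=
    (hA.hasFDerivAt_phi hm x).comp_hasDerivAt_of_eq 0 (hasDerivAt_xcur hx d) (xcur_zero hx d).symm
  obtain ⟨αbar, hαbar, harmijo⟩ := hderiv.exists_armijo hd hσ.2
  rw [xcur_zero hx] at harmijo
  refine ⟨αbar, hαbar, fun α hα => ⟨harmijo α hα, ?_⟩⟩
  linarith [harmijo α hα, mul_neg_of_pos_of_neg (mul_pos hσ.1 hα.1) hd]

/-- a direction with `⟪A x^{m-1}, P_x d⟫ < 0` is a curve descent direction of `φ`,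
and the Armijo-type inequality holds for all sufficiently small `α > 0`. -/
theorem stmt2 {m n : ℕ} (hn : 1 ≤ n) (hm : 2 ≤ m) (A : Tensor m n) (hA : IsSymmTensor A)
    (x : Euc n) (hx : ‖x‖ = 1) (d : Euc n)
    (hd : ⟪tvec A hm x, Pproj x d⟫ < 0) (σ : ℝ) (hσ : σ ∈ Set.Ioo (0 : ℝ) 1) :
    ∃ αbar > 0, ∀ α ∈ Set.Ioc (0 : ℝ) αbar,
      phi A (xcur x d α) ≤ phi A x + σ * α * ⟪tvec A hm x, Pproj x d⟫ ∧
      phi A (xcur x d α) < phi A x :=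
  stmt2_general hm A hA x hx d hd σ hσ
end

section
/- Under Assumption (A), the linear map E → E × ℝ given by d ↦ (P_{x̄}(F′(x̄) d), ⟪x̄, d⟫) is injective (equivalently, bijective). -/
open scoped RealInnerProductSpace

/-! If `d` lies in the kernel, then `⟪x̄, d⟫ = 0` and `F′(x̄) d` is a multiple of `x̄`, so
`⟪F′(x̄) d, d⟫ = 0`. Because `⟪x̄, d⟫ = 0` and `λ̄ = A x̄^m`, this inner product is exactly the
second-order form `(m - 1) A(x̄, …, x̄, d, d) - λ̄ ‖d‖²`, which is positive for `d ≠ 0`. -/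

lemma inner_wvec {m n : ℕ} (A : Tensor m n) (hm : 2 ≤ m) (x d v : Euc n) :
    ⟪wvec A hm x d, v⟫ =
      A (Function.update (Function.update (fun _ => x) (sndIdx hm) d) (lastIdx hm) v) := by
  simp [wvec, InnerProductSpace.toDual_symm_apply]

lemma inner_FderivL_self {m n : ℕ} (A : Tensor m n) (hm : 2 ≤ m) (x d : Euc n) :
    ⟪FderivL A hm x d, d⟫ = ((m : ℝ) - 1) * A2 A hm x d - tpow A x * ‖d‖ ^ 2
      - (m : ℝ) * ⟪tvec A hm x, d⟫ * ⟪x, d⟫ := by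
  change ⟪((m : ℝ) - 1) • wvec A hm x d - tpow A x • d - ((m : ℝ) * ⟪tvec A hm x, d⟫) • x, d⟫ = _
  rw [inner_sub_left, inner_sub_left, real_inner_smul_left, real_inner_smul_left,
    real_inner_smul_left, inner_wvec, real_inner_self_eq_norm_sq, A2]

lemma Pproj_sub {n : ℕ} (x u v : Euc n) : Pproj x (u - v) = Pproj x u - Pproj x v := by
  simp only [Pproj, inner_sub_right, sub_smul]
  abel

lemma inner_eq_zero_of_Pproj_eq_zero {n : ℕ} {x v d : Euc n} (hv : Pproj x v = 0)
    (hd : ⟪x, d⟫ = 0) : ⟪v, d⟫ = 0 := by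
  rw [sub_eq_zero.mp hv, real_inner_smul_left, hd, mul_zero]

lemma AssumpA.eq_zero_of_Pproj_FderivL_eq_zero {m n : ℕ} {A : Tensor m n} {hm : 2 ≤ m}
    {xb : Euc n} {lam : ℝ} (hAss : AssumpA A hm xb lam) {d : Euc n} (hperp : ⟪xb, d⟫ = 0)
    (hP : Pproj xb (FderivL A hm xb d) = 0) : d = 0 := by
  obtain ⟨-, -, htpow, hsosc⟩ := hAss
  by_contra hd
  have hform : ⟪FderivL A hm xb d, d⟫ = ((m : ℝ) - 1) * A2 A hm xb d - lam * ‖d‖ ^ 2 := by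
    rw [inner_FderivL_self, hperp, htpow]
    ring
  have hzero : ⟪FderivL A hm xb d, d⟫ = 0 := inner_eq_zero_of_Pproj_eq_zero hP hperp
  exact (hsosc d hd hperp).ne' (hform ▸ hzero)

theorem stmt6_general {m n : ℕ} (hm : 2 ≤ m) (A : Tensor m n)
    (xb : Euc n) (lam : ℝ) (hAss : AssumpA A hm xb lam) :
    Function.Injective (fun d : Euc n => (Pproj xb (FderivL A hm xb d), ⟪xb, d⟫)) := by
  intro d₁ d₂ h
  obtain ⟨hP, hperp⟩ := Prod.mk.inj h
  refine sub_eq_zero.mp (hAss.eq_zero_of_Pproj_FderivL_eq_zero ?_ ?_)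
  · rw [inner_sub_right, hperp, sub_self]
  · rw [map_sub, Pproj_sub, hP, sub_self]

/-- under Assumption (A), the linear map `d ↦ (P_x̄ (F'(x̄) d), ⟪x̄, d⟫)`
is injective. -/
theorem stmt6 {m n : ℕ} (hn : 1 ≤ n) (hm : 2 ≤ m) (A : Tensor m n) (hA : IsSymmTensor A)
    (xb : Euc n) (lam : ℝ) (hAss : AssumpA A hm xb lam) :
    Function.Injective (fun d : Euc n => (Pproj xb (FderivL A hm xb d), ⟪xb, d⟫)) :=
  stmt6_general hm A xb lam hAss
end

section
/- Let x ∈ 𝔹 be such that ⟪d, F′(x) d⟫ > 0 for every nonzero d ∈ E with ⟪x, d⟫ = 0. Then the Newton system at x has exactly one solution: there exists a unique d ∈ E with ⟪x, d⟫ = 0 and P_x(F′(x) d + F(x)) = 0. -/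
open scoped RealInnerProductSpace

/-!
For a unit vector `x`, `P_x` is the orthogonal projection onto `x^⊥`, so the Newton system asks
for `d ∈ x^⊥` solving the compressed system `P_x F'(x) d = -P_x F(x)`. The compression is
injective on `x^⊥`: if `P_x F'(x) d = 0` then `⟪d, F'(x) d⟫ = ⟪d, P_x F'(x) d⟫ = 0`, forcing
`d = 0`. Being an injective endomorphism of a finite-dimensional space, it is bijective.
-/

open Submodule

section Compression

variable {E : Type*} [NormedAddCommGroup E] [InnerProductSpace ℝ E]
  (K : Submodule ℝ E) [FiniteDimensional ℝ K] (T : E →ₗ[ℝ] E)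

theorem Submodule.injective_orthogonalProjectionOnto_comp_comp_subtype
    (hT : ∀ d ∈ K, d ≠ 0 → 0 < ⟪d, T d⟫) :
    Function.Injective (K.orthogonalProjectionOnto.toLinearMap ∘ₗ T ∘ₗ K.subtype) := by
  refine LinearMap.ker_eq_bot.mp (LinearMap.ker_eq_bot'.mpr fun d hd => ?_)
  by_contra hd0
  have hTd : K.starProjection (T d) = 0 := congrArg Subtype.val hd
  have hself := inner_starProjection_left_eq_right K d (T d)
  rw [starProjection_eq_self_iff.mpr d.2, hTd, inner_zero_right] at hself
  exact (hT d d.2 (by simpa using hd0)).ne' hself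

theorem Submodule.existsUnique_mem_starProjection_add_eq_zero
    (hT : ∀ d ∈ K, d ≠ 0 → 0 < ⟪d, T d⟫) (b : E) :
    ∃! d, d ∈ K ∧ K.starProjection (T d + b) = 0 := by
  have hinj := K.injective_orthogonalProjectionOnto_comp_comp_subtype T hT
  have hbij : Function.Bijective (K.orthogonalProjectionOnto.toLinearMap ∘ₗ T ∘ₗ K.subtype) :=
    ⟨hinj, LinearMap.injective_iff_surjective.mp hinj⟩
  have hsolve : ∀ d : K, K.starProjection (T d + b) = 0 ↔
      (K.orthogonalProjectionOnto.toLinearMap ∘ₗ T ∘ₗ K.subtype) d =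
        -K.orthogonalProjectionOnto b := by
    intro d
    rw [eq_neg_iff_add_eq_zero, starProjection_apply, ZeroMemClass.coe_eq_zero, map_add]
    rfl
  obtain ⟨d, hd, huniq⟩ := hbij.existsUnique (-K.orthogonalProjectionOnto b)
  refine ⟨d, ⟨d.2, (hsolve d).mpr hd⟩, fun e ⟨he, h⟩ => ?_⟩
  exact congrArg Subtype.val (huniq ⟨e, he⟩ ((hsolve ⟨e, he⟩).mp h))

end Compression

theorem Pproj_eq_starProjection {n : ℕ} {x : Euc n} (hx : ‖x‖ = 1) (y : Euc n) :
    Pproj x y = (ℝ ∙ x)ᗮ.starProjection y := by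
  rw [starProjection_orthogonal_val, starProjection_unit_singleton ℝ hx, Pproj]

theorem stmt7_general {m n : ℕ} (hm : 2 ≤ m) (A : Tensor m n)
    (x : Euc n) (hx : ‖x‖ = 1)
    (hpd : ∀ d : Euc n, d ≠ 0 → ⟪x, d⟫ = 0 → 0 < ⟪d, FderivL A hm x d⟫) :
    ∃! d : Euc n, ⟪x, d⟫ = 0 ∧ Pproj x (FderivL A hm x d + Fvec A hm x) = 0 := by
  simp only [← mem_orthogonal_singleton_iff_inner_right, Pproj_eq_starProjection hx]
  exact (ℝ ∙ x)ᗮ.existsUnique_mem_starProjection_add_eq_zero (FderivL A hm x).toLinearMap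
    (fun d hd hd0 => hpd d hd0 (mem_orthogonal_singleton_iff_inner_right.mp hd)) _

/-- if the quadratic form of `F'(x)` is positive definite on `x^⊥`, then the
Newton system at `x` has a unique solution. -/
theorem stmt7 {m n : ℕ} (hn : 1 ≤ n) (hm : 2 ≤ m) (A : Tensor m n) (hA : IsSymmTensor A)
    (x : Euc n) (hx : ‖x‖ = 1)
    (hpd : ∀ d : Euc n, d ≠ 0 → ⟪x, d⟫ = 0 → 0 < ⟪d, FderivL A hm x d⟫) :
    ∃! d : Euc n, ⟪x, d⟫ = 0 ∧ Pproj x (FderivL A hm x d + Fvec A hm x) = 0 :=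
  stmt7_general hm A x hx hpd
end

section
/- For every x ∈ 𝔹, ⟪x, F′(x)* F(x)⟫ = (m − 1) ‖F(x)‖², where F′(x)* denotes the adjoint of F′(x). (This is the key identity ⟪x, ∇θ(x)⟫ = (m−1)‖F(x)‖² for the residual function θ(x) = (1/2)‖F(x)‖².) -/
open scoped RealInnerProductSpace

/-! The radial derivative of `F` is computable in closed form: `F'(x) x = (m-1) F(x) - 2 (A x^m) x`.
On the unit sphere `F(x) ⊥ x`, so `⟪x, F'(x)* F(x)⟫ = ⟪F'(x) x, F(x)⟫ = (m-1) ‖F(x)‖²`. -/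

section

variable {m n : ℕ} (A : Tensor m n) (hm : 2 ≤ m)

lemma inner_tvec_left (x v : Euc n) :
    ⟪tvec A hm x, v⟫ = A (Function.update (fun _ => x) (lastIdx hm) v) := by
  rw [tvec, InnerProductSpace.toDual_symm_apply]
  rfl

lemma inner_tvec_self (x : Euc n) : ⟪tvec A hm x, x⟫ = tpow A x := by
  rw [inner_tvec_left, Function.update_eq_self, tpow]

lemma wvec_self (x : Euc n) : wvec A hm x x = tvec A hm x := by
  rw [wvec, tvec, Function.update_eq_self]

lemma FderivL_apply (x d : Euc n) :
    FderivL A hm x d =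
      ((m : ℝ) - 1) • wvec A hm x d - tpow A x • d - ((m : ℝ) * ⟪tvec A hm x, d⟫) • x :=
  rfl

lemma FderivL_apply_self (x : Euc n) :
    FderivL A hm x x = ((m : ℝ) - 1) • Fvec A hm x - (2 * tpow A x) • x := by
  rw [FderivL_apply, wvec_self, inner_tvec_self, Fvec]
  module

lemma inner_Fvec_self (x : Euc n) : ⟪Fvec A hm x, x⟫ = (1 - ‖x‖ ^ 2) * tpow A x := by
  rw [Fvec, inner_sub_left, real_inner_smul_left, inner_tvec_self, real_inner_self_eq_norm_sq]
  ring

end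

theorem stmt15_general {m n : ℕ} (hm : 2 ≤ m) (A : Tensor m n)
    (x : Euc n) (hx : ‖x‖ = 1) :
    ⟪x, ContinuousLinearMap.adjoint (FderivL A hm x) (Fvec A hm x)⟫ =
      ((m : ℝ) - 1) * ‖Fvec A hm x‖ ^ 2 := by
  have hFx : ⟪Fvec A hm x, x⟫ = 0 := by rw [inner_Fvec_self, hx]; ring
  rw [ContinuousLinearMap.adjoint_inner_right, FderivL_apply_self, inner_sub_left,
    real_inner_smul_left, real_inner_smul_left, real_inner_comm (Fvec A hm x) x, hFx,
    real_inner_self_eq_norm_sq, mul_zero, sub_zero]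

/-- the key identity `⟪x, F'(x)* F(x)⟫ = (m-1) ‖F(x)‖²` on the unit sphere. -/
theorem stmt15 {m n : ℕ} (hn : 1 ≤ n) (hm : 2 ≤ m) (A : Tensor m n) (hA : IsSymmTensor A)
    (x : Euc n) (hx : ‖x‖ = 1) :
    ⟪x, ContinuousLinearMap.adjoint (FderivL A hm x) (Fvec A hm x)⟫ =
      ((m : ℝ) - 1) * ‖Fvec A hm x‖ ^ 2 :=
  stmt15_general hm A x hx
end
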